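/- Let Ω ⊂ ℝⁿ be a bounded measurable set of positive measure, p ≥ 1, and g : Ω → ℝ measurable with 0 < ‖g‖_p ≤ 1 and ⨍_Ω |g|^p log(e + |g|) dx < ∞. Then ⨍_Ω |g|^p · log(e + |g|/‖g‖_p) dx ≤ ⨍_Ω |g|^p·log(e + |g|) dx + (1/e)·‖g‖_p^{p−1}. -/

import Mathlib

open Real MeasureTheory

variable {n : ℕ}

/-- The mean `L^p` norm `‖g‖_p = (⨍_Ω |g|^p)^{1/p}` (with mean integral). -/
noncomputable def meanLpNorm (Ω : Set (EuclideanSpace ℝ (Fin n))) (p : ℝ)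
    (g : EuclideanSpace ℝ (Fin n) → ℝ) : ℝ :=
  (⨍ x in Ω, |g x| ^ p) ^ (1 / p)

/-!
Writing `N = ‖g‖_p ∈ (0, 1]`, the pointwise inequality `log (e + s t) ≤ log (e + s) + log t`
with `s = |g|`, `t = 1 / N ≥ 1` gives
`⨍ |g|^p log (e + |g| / N) ≤ ⨍ |g|^p log (e + |g|) + log (1 / N) ⨍ |g|^p`,
and `⨍ |g|^p = N^p`. Finally `log (1 / N) ≤ 1 / (e N)` turns the last term into `N^(p-1) / e`.
-/

lemma Real.log_exp_one_add_mul_le {s t : ℝ} (hs : 0 ≤ s) (ht : 1 ≤ t) :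
    log (exp 1 + s * t) ≤ log (exp 1 + s) + log t := by
  rw [← log_mul (by positivity) (by positivity)]
  exact log_le_log (by positivity) (by nlinarith [exp_pos 1])

lemma Real.log_le_div_exp_one {x : ℝ} (hx : 0 < x) : log x ≤ x / exp 1 := by
  rw [le_div_iff₀ (exp_pos 1), mul_comm]
  simpa only [exp_log hx] using exp_one_mul_le_exp (x := log x)

lemma Real.neg_log_mul_rpow_le {c : ℝ} (hc : 0 < c) (p : ℝ) :
    -log c * c ^ p ≤ c ^ (p - 1) / exp 1 := by
  have hlog : -log c ≤ c⁻¹ / exp 1 := by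
    simpa only [log_inv] using log_le_div_exp_one (inv_pos.2 hc)
  calc -log c * c ^ p ≤ c⁻¹ / exp 1 * c ^ p :=
        mul_le_mul_of_nonneg_right hlog (rpow_nonneg hc.le p)
    _ = c ^ (p - 1) / exp 1 := by
        rw [rpow_sub_one hc.ne']
        ring

lemma Real.rpow_mul_log_exp_one_add_div_le {a c : ℝ} (p : ℝ) (ha : 0 ≤ a) (hc₀ : 0 < c)
    (hc₁ : c ≤ 1) :
    a ^ p * log (exp 1 + a / c) ≤ a ^ p * log (exp 1 + a) - log c * a ^ p := by
  have key := log_exp_one_add_mul_le ha (one_le_inv₀ hc₀ |>.2 hc₁)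
  rw [log_inv, ← div_eq_mul_inv] at key
  nlinarith [rpow_nonneg ha p]

lemma Real.rpow_mul_log_exp_one_add_div_nonneg {a c : ℝ} (p : ℝ) (ha : 0 ≤ a) (hc : 0 < c) :
    0 ≤ a ^ p * log (exp 1 + a / c) := by
  have : 1 ≤ exp 1 + a / c := by
    nlinarith [one_le_exp zero_le_one, div_nonneg ha hc.le]
  exact mul_nonneg (rpow_nonneg ha p) (log_nonneg this)

section

variable {α : Type*} [MeasurableSpace α] {μ : Measure α} {g : α → ℝ} {p : ℝ}

/-- Measurability comes from that of `|g|^p` alone, since `|g| = (|g|^p)^(1/p)`. -/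
lemma aestronglyMeasurable_rpow_mul_log_exp_one_add_div (hp : p ≠ 0)
    (hgp : AEStronglyMeasurable (fun x => |g x| ^ p) μ) (c : ℝ) :
    AEStronglyMeasurable (fun x => |g x| ^ p * log (exp 1 + |g x| / c)) μ := by
  have hcomp : (fun x => |g x| ^ p * log (exp 1 + |g x| / c)) =
      (fun y => y * log (exp 1 + y ^ p⁻¹ / c)) ∘ (fun x => |g x| ^ p) := by
    funext x
    simp only [Function.comp_apply, rpow_rpow_inv (abs_nonneg (g x)) hp]
  rw [hcomp]
  exact (Measurable.comp_aemeasurable (by fun_prop) hgp.aemeasurable).aestronglyMeasurable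

lemma integral_rpow_mul_log_exp_one_add_div_le (hp : p ≠ 0)
    (hint : Integrable (fun x => |g x| ^ p) μ)
    (hintlog : Integrable (fun x => |g x| ^ p * log (exp 1 + |g x|)) μ)
    {c : ℝ} (hc₀ : 0 < c) (hc₁ : c ≤ 1) :
    ∫ x, |g x| ^ p * log (exp 1 + |g x| / c) ∂μ ≤
      (∫ x, |g x| ^ p * log (exp 1 + |g x|) ∂μ) - log c * ∫ x, |g x| ^ p ∂μ := by
  have hbound (x : α) := rpow_mul_log_exp_one_add_div_le p (abs_nonneg (g x)) hc₀ hc₁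
  have hint_bound := hintlog.sub (hint.const_mul (log c))
  have hint_lhs : Integrable (fun x => |g x| ^ p * log (exp 1 + |g x| / c)) μ := by
    refine hint_bound.mono'
      (aestronglyMeasurable_rpow_mul_log_exp_one_add_div hp hint.aestronglyMeasurable c) ?_
    refine .of_forall fun x => ?_
    rw [norm_of_nonneg (rpow_mul_log_exp_one_add_div_nonneg p (abs_nonneg (g x)) hc₀)]
    exact hbound x
  rw [← integral_const_mul, ← integral_sub hintlog (hint.const_mul (log c))]
  exact integral_mono hint_lhs hint_bound hbound

lemma average_rpow_mul_log_exp_one_add_div_le (hp : p ≠ 0)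
    (hint : Integrable (fun x => |g x| ^ p) μ)
    (hintlog : Integrable (fun x => |g x| ^ p * log (exp 1 + |g x|)) μ)
    {c : ℝ} (hc₀ : 0 < c) (hc₁ : c ≤ 1) :
    ⨍ x, |g x| ^ p * log (exp 1 + |g x| / c) ∂μ ≤
      (⨍ x, |g x| ^ p * log (exp 1 + |g x|) ∂μ) - log c * ⨍ x, |g x| ^ p ∂μ := by
  simp only [average_eq, smul_eq_mul]
  have := mul_le_mul_of_nonneg_left
    (integral_rpow_mul_log_exp_one_add_div_le hp hint hintlog hc₀ hc₁)
    (inv_nonneg.2 (measureReal_nonneg (μ := μ) (s := Set.univ)))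
  linarith

end

lemma meanLpNorm_rpow (Ω : Set (EuclideanSpace ℝ (Fin n))) {p : ℝ} (hp : p ≠ 0)
    (g : EuclideanSpace ℝ (Fin n) → ℝ) :
    meanLpNorm Ω p g ^ p = ⨍ x in Ω, |g x| ^ p := by
  have hmean : 0 ≤ ⨍ x in Ω, |g x| ^ p := by
    rw [average_eq']
    exact integral_nonneg fun x => rpow_nonneg (abs_nonneg (g x)) p
  rw [meanLpNorm, one_div, rpow_inv_rpow hmean hp]

theorem mean_log_normalized_le_general (Ω : Set (EuclideanSpace ℝ (Fin n)))
    (p : ℝ) (hp : 1 ≤ p)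
    (g : EuclideanSpace ℝ (Fin n) → ℝ)
    (hint : Integrable (fun x => |g x| ^ p) (volume.restrict Ω))
    (hintlog : Integrable (fun x => |g x| ^ p * Real.log (Real.exp 1 + |g x|))
      (volume.restrict Ω))
    (h0 : 0 < meanLpNorm Ω p g) (h1 : meanLpNorm Ω p g ≤ 1) :
    ⨍ x in Ω, |g x| ^ p * Real.log (Real.exp 1 + |g x| / meanLpNorm Ω p g) ≤
      (⨍ x in Ω, |g x| ^ p * Real.log (Real.exp 1 + |g x|)) +
        (1 / Real.exp 1) * meanLpNorm Ω p g ^ (p - 1) := by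
  have hp₀ : p ≠ 0 := by positivity
  have hmain := average_rpow_mul_log_exp_one_add_div_le hp₀ hint hintlog h0 h1
  rw [← meanLpNorm_rpow Ω hp₀ g] at hmain
  have htail := neg_log_mul_rpow_le h0 p
  rw [one_div_mul_eq_div]
  linarith

theorem mean_log_normalized_le (Ω : Set (EuclideanSpace ℝ (Fin n)))
    (hΩm : MeasurableSet Ω) (hΩfin : volume Ω < ⊤) (hΩpos : 0 < volume Ω)
    (p : ℝ) (hp : 1 ≤ p)
    (g : EuclideanSpace ℝ (Fin n) → ℝ) (hg : Measurable g)
    (hint : Integrable (fun x => |g x| ^ p) (volume.restrict Ω))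
    (hintlog : Integrable (fun x => |g x| ^ p * Real.log (Real.exp 1 + |g x|))
      (volume.restrict Ω))
    (h0 : 0 < meanLpNorm Ω p g) (h1 : meanLpNorm Ω p g ≤ 1) :
    ⨍ x in Ω, |g x| ^ p * Real.log (Real.exp 1 + |g x| / meanLpNorm Ω p g) ≤
      (⨍ x in Ω, |g x| ^ p * Real.log (Real.exp 1 + |g x|)) +
        (1 / Real.exp 1) * meanLpNorm Ω p g ^ (p - 1) :=
  mean_log_normalized_le_general Ω p hp g hint hintlog h0 h1
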